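/- Let (A, B, R) be a VH-datum with parameters (m,n) and let M₁, M₂ be its transition matrices. Define a relation → on R by r → s iff M₁(s,r) = 1 or M₂(s,r) = 1. Then the directed graph (R, →) is irreducible: for all r, s ∈ R there is a directed path of positive length from r to s (i.e., the transitive closure of → relates every ordered pair of elements of R). -/
import Mathlib


/-- A VH-datum with parameters `(m,n)`: finite sets `A`, `B` of even
cardinalities `m, n ≥ 4` with fixed-point-free involutions, together with a set
`R ⊆ A × B × B × A` satisfying the Burger–Mozes conditions (i)–(iii). -/
structure VHDatum (m n : ℕ) (A B : Type) [Fintype A] [Fintype B]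
    [DecidableEq A] [DecidableEq B] where
  cardA : Fintype.card A = m
  cardB : Fintype.card B = n
  four_le_m : 4 ≤ m
  four_le_n : 4 ≤ n
  even_m : Even m
  even_n : Even n
  invA : A → A
  invB : B → B
  invA_invA : ∀ a, invA (invA a) = a
  invB_invB : ∀ b, invB (invB b) = b
  invA_ne : ∀ a, invA a ≠ a
  invB_ne : ∀ b, invB b ≠ b
  R : Finset (A × B × B × A)
  cond_i : ∀ a b b' a', (a, b, b', a') ∈ R →
    (invA a, b', b, invA a') ∈ R ∧ (invA a', invB b', invB b, invA a) ∈ R ∧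
    (a', invB b, invB b', a) ∈ R
  cond_ii : ∀ a b, (a, b, invB b, invA a) ∉ R
  cond_iii_ab : Set.BijOn (fun x : A × B × B × A => (x.1, x.2.1)) ↑R Set.univ
  cond_iii_ab' : Set.BijOn (fun x : A × B × B × A => (x.1, x.2.2.1)) ↑R Set.univ
  cond_iii_a'b : Set.BijOn (fun x : A × B × B × A => (x.2.2.2, x.2.1)) ↑R Set.univ
  cond_iii_a'b' : Set.BijOn (fun x : A × B × B × A => (x.2.2.2, x.2.2.1)) ↑R Set.univ

variable {m n : ℕ} {A B : Type} [Fintype A] [Fintype B] [DecidableEq A] [DecidableEq B]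

/-- The horizontal transition matrix `M₁`: for `r = (a,b,b′,a′)` and
`s = (c,d,d′,c′)` in `R`, `M₁(s,r) = 1` iff `d′ = b` and `c ≠ a⁻¹`. -/
def VHDatum.M1 (D : VHDatum m n A B) : Matrix D.R D.R ℤ := fun s r =>
  if (s : A × B × B × A).2.2.1 = (r : A × B × B × A).2.1 ∧
      (s : A × B × B × A).1 ≠ D.invA (r : A × B × B × A).1 then 1 else 0

/-- The vertical transition matrix `M₂`: for `r = (a,b,b′,a′)` and
`s = (c,d,d′,c′)` in `R`, `M₂(s,r) = 1` iff `c = a′` and `d ≠ b⁻¹`. -/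
def VHDatum.M2 (D : VHDatum m n A B) : Matrix D.R D.R ℤ := fun s r =>
  if (s : A × B × B × A).1 = (r : A × B × B × A).2.2.2 ∧
      (s : A × B × B × A).2.1 ≠ D.invB (r : A × B × B × A).2.1 then 1 else 0

-- ## helpers


lemma Finset.exists_not_mem_of_card_lt {α : Type*} [Fintype α] [DecidableEq α]
    (s : Finset α) (h : s.card < Fintype.card α) : ∃ u, u ∉ s := by
  have hns : ¬ (Finset.univ : Finset α) ⊆ s := fun hsub =>
    absurd (Finset.card_le_card hsub) (by rw [Finset.card_univ]; omega)
  obtain ⟨u, hu⟩ := Finset.sdiff_nonempty.2 hns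
  exact ⟨u, (Finset.mem_sdiff.1 hu).2⟩

lemma exists_ne_ne {α : Type*} [Fintype α] [DecidableEq α]
    (h : 3 ≤ Fintype.card α) (v₁ v₂ : α) : ∃ u, u ≠ v₁ ∧ u ≠ v₂ := by
  have hc : ({v₁, v₂} : Finset α).card < Fintype.card α := by
    have h1 : ({v₁, v₂} : Finset α).card ≤ 2 :=
      le_trans (Finset.card_insert_le _ _) (by simp)
    omega
  obtain ⟨u, hu⟩ := Finset.exists_not_mem_of_card_lt _ hc
  simp only [Finset.mem_insert, Finset.mem_singleton, not_or] at hu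
  exact ⟨u, hu.1, hu.2⟩

lemma exists_ne_ne_ne {α : Type*} [Fintype α] [DecidableEq α]
    (h : 4 ≤ Fintype.card α) (v₁ v₂ v₃ : α) : ∃ u, u ≠ v₁ ∧ u ≠ v₂ ∧ u ≠ v₃ := by
  have hc : ({v₁, v₂, v₃} : Finset α).card < Fintype.card α := by
    have h1 : ({v₁, v₂, v₃} : Finset α).card ≤ 3 := by
      refine le_trans (Finset.card_insert_le _ _) ?_
      have h2 : ({v₂, v₃} : Finset α).card ≤ 2 :=
        le_trans (Finset.card_insert_le _ _) (by simp)
      omega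
    omega
  obtain ⟨u, hu⟩ := Finset.exists_not_mem_of_card_lt _ hc
  simp only [Finset.mem_insert, Finset.mem_singleton, not_or] at hu
  exact ⟨u, hu.1, hu.2.1, hu.2.2⟩

lemma exists_pair_ne_ne {α : Type*} [Fintype α] [DecidableEq α]
    (h : 3 ≤ Fintype.card α) (v : α) : ∃ u₁ u₂, u₁ ≠ u₂ ∧ u₁ ≠ v ∧ u₂ ≠ v := by
  have hc : 1 < (Finset.univ.erase v).card := by
    rw [Finset.card_erase_of_mem (Finset.mem_univ v), Finset.card_univ]
    omega
  obtain ⟨u₁, hu₁, u₂, hu₂, hne⟩ := Finset.one_lt_card.1 hc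
  exact ⟨u₁, u₂, hne, Finset.ne_of_mem_erase hu₁, Finset.ne_of_mem_erase hu₂⟩

namespace VHDatum

variable (D : VHDatum m n A B)

lemma inj_ab {x y : A × B × B × A} (hx : x ∈ D.R) (hy : y ∈ D.R)
    (h1 : x.1 = y.1) (h2 : x.2.1 = y.2.1) : x = y :=
  D.cond_iii_ab.injOn (Finset.mem_coe.2 hx) (Finset.mem_coe.2 hy)
    (by simp only [h1, h2])

lemma inj_ab' {x y : A × B × B × A} (hx : x ∈ D.R) (hy : y ∈ D.R)
    (h1 : x.1 = y.1) (h2 : x.2.2.1 = y.2.2.1) : x = y :=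
  D.cond_iii_ab'.injOn (Finset.mem_coe.2 hx) (Finset.mem_coe.2 hy)
    (by simp only [h1, h2])

lemma inj_a'b' {x y : A × B × B × A} (hx : x ∈ D.R) (hy : y ∈ D.R)
    (h1 : x.2.2.2 = y.2.2.2) (h2 : x.2.2.1 = y.2.2.1) : x = y :=
  D.cond_iii_a'b'.injOn (Finset.mem_coe.2 hx) (Finset.mem_coe.2 hy)
    (by simp only [h1, h2])

lemma exists_ab' (c : A) (w : B) : ∃ x, x ∈ D.R ∧ x.1 = c ∧ x.2.2.1 = w := by
  obtain ⟨x, hx, hfx⟩ := D.cond_iii_ab'.surjOn (Set.mem_univ (c, w))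
  exact ⟨x, Finset.mem_coe.1 hx, congrArg Prod.fst hfx, congrArg Prod.snd hfx⟩

lemma exists_a'b' (c : A) (w : B) : ∃ x, x ∈ D.R ∧ x.2.2.2 = c ∧ x.2.2.1 = w := by
  obtain ⟨x, hx, hfx⟩ := D.cond_iii_a'b'.surjOn (Set.mem_univ (c, w))
  exact ⟨x, Finset.mem_coe.1 hx, congrArg Prod.fst hfx, congrArg Prod.snd hfx⟩

lemma edgeH {x y : D.R} (h1 : (y : A × B × B × A).2.2.1 = (x : A × B × B × A).2.1)
    (h2 : (y : A × B × B × A).1 ≠ D.invA (x : A × B × B × A).1) :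
    D.M1 y x = 1 ∨ D.M2 y x = 1 :=
  Or.inl (by simp only [VHDatum.M1]; exact if_pos ⟨h1, h2⟩)

lemma edgeV {x y : D.R} (h1 : (y : A × B × B × A).1 = (x : A × B × B × A).2.2.2)
    (h2 : (y : A × B × B × A).2.1 ≠ D.invB (x : A × B × B × A).2.1) :
    D.M1 y x = 1 ∨ D.M2 y x = 1 :=
  Or.inr (by simp only [VHDatum.M2]; exact if_pos ⟨h1, h2⟩)

end VHDatum

/-- the directed graph on `R` with an edge `r → s` whenever
`M₁(s,r) = 1` or `M₂(s,r) = 1` is irreducible: every ordered pair of vertices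
is joined by a directed path of positive length. -/
theorem VHDatum.irreducible (D : VHDatum m n A B) (r s : D.R) :
    Relation.TransGen (fun x y : D.R => D.M1 y x = 1 ∨ D.M2 y x = 1) r s := by
  classical
  have hm := D.four_le_m
  have hn := D.four_le_n
  have hA3 : 3 ≤ Fintype.card A := by rw [D.cardA]; omega
  have hB3 : 3 ≤ Fintype.card B := by rw [D.cardB]; omega
  have hB4 : 4 ≤ Fintype.card B := by rw [D.cardB]; omega
  -- Step 0: an element `x` with `x.b' = r.b`, `x.a ≠ (r.a)⁻¹` (so `r → x` is an
  -- M1-edge) and moreover `x.a' ≠ (s.a)⁻¹`.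
  obtain ⟨x, hxR, hxb', hxa, hxa'⟩ :
      ∃ x, x ∈ D.R ∧ x.2.2.1 = (r : A × B × B × A).2.1 ∧
        x.1 ≠ D.invA (r : A × B × B × A).1 ∧
        x.2.2.2 ≠ D.invA (s : A × B × B × A).1 := by
    obtain ⟨u₁, u₂, hne, h1, h2⟩ := exists_pair_ne_ne hA3 (D.invA (r : A × B × B × A).1)
    obtain ⟨x₁, hx₁R, hx₁a, hx₁b⟩ := D.exists_ab' u₁ (r : A × B × B × A).2.1
    obtain ⟨x₂, hx₂R, hx₂a, hx₂b⟩ := D.exists_ab' u₂ (r : A × B × B × A).2.1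
    by_cases hx : x₁.2.2.2 = D.invA (s : A × B × B × A).1
    · refine ⟨x₂, hx₂R, hx₂b, by rw [hx₂a]; exact h2, fun h => ?_⟩
      have he : x₁ = x₂ := D.inj_a'b' hx₁R hx₂R (hx.trans h.symm) (hx₁b.trans hx₂b.symm)
      exact hne (by rw [← hx₁a, ← hx₂a, he])
    · exact ⟨x₁, hx₁R, hx₁b, by rw [hx₁a]; exact h1, hx⟩
  have e₀ : D.M1 ⟨x, hxR⟩ r = 1 ∨ D.M2 ⟨x, hxR⟩ r = 1 := D.edgeH hxb' hxa
  refine Relation.TransGen.head e₀ ?_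
  by_cases hcase : ∃ w, w ≠ D.invB x.2.1 ∧ w ≠ D.invB (s : A × B × B × A).2.2.1 ∧
      ∃ p, p ∈ D.R ∧ p.1 = D.invA x.2.2.2 ∧ p.2.2.1 = w ∧
        p.2.2.2 ≠ (s : A × B × B × A).1
  · -- Case YES: a path x → y → z → s of M1, M2, M2 edges.
    obtain ⟨w, hw1, hw2, p, hpR, hpa, hpb, hpa'⟩ := hcase
    obtain ⟨z, hzR, hza', hzb'⟩ := D.exists_a'b' (s : A × B × B × A).1 w
    have hzA : z.1 ≠ D.invA x.2.2.2 := by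
      intro h
      have he : z = p := D.inj_ab' hzR hpR (h.trans hpa.symm) (hzb'.trans hpb.symm)
      exact hpa' (by rw [← he, hza'])
    obtain ⟨y, hyR, hya', hyb'⟩ := D.exists_a'b' z.1 x.2.1
    have exy : D.M1 ⟨y, hyR⟩ ⟨x, hxR⟩ = 1 ∨ D.M2 ⟨y, hyR⟩ ⟨x, hxR⟩ = 1 := by
      refine D.edgeH hyb' fun h => ?_
      have hξ := (D.cond_i x.1 x.2.1 x.2.2.1 x.2.2.2 hxR).1
      have he : y = (D.invA x.1, x.2.2.1, x.2.1, D.invA x.2.2.2) :=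
        D.inj_ab' hyR hξ h hyb'
      exact hzA (by rw [← hya', he])
    have eyz : D.M1 ⟨z, hzR⟩ ⟨y, hyR⟩ = 1 ∨ D.M2 ⟨z, hzR⟩ ⟨y, hyR⟩ = 1 := by
      refine D.edgeV hya'.symm fun h => ?_
      have hη := (D.cond_i y.1 y.2.1 y.2.2.1 y.2.2.2 hyR).2.2
      have he : z = (y.2.2.2, D.invB y.2.1, D.invB y.2.2.1, y.1) :=
        D.inj_ab hzR hη hya'.symm h
      apply hw1
      rw [← hzb', he]
      rw [hyb']
    have ezs : D.M1 s ⟨z, hzR⟩ = 1 ∨ D.M2 s ⟨z, hzR⟩ = 1 := by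
      refine D.edgeV hza'.symm fun h => ?_
      have hη := (D.cond_i z.1 z.2.1 z.2.2.1 z.2.2.2 hzR).2.2
      have he : (s : A × B × B × A) = (z.2.2.2, D.invB z.2.1, D.invB z.2.2.1, z.1) :=
        D.inj_ab s.2 hη hza'.symm h
      have hb : (s : A × B × B × A).2.2.1 = D.invB w := by rw [he, hzb']
      exact hw2 (by rw [hb, D.invB_invB])
    exact Relation.TransGen.head exy (Relation.TransGen.head eyz
      (Relation.TransGen.single ezs))
  · -- Case NO: a path x → y → z → u → s of M1, M2, M2, M2 edges.
    push_neg at hcase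
    obtain ⟨f, hf1, hf2⟩ := exists_ne_ne hB3 (D.invB x.2.1)
      (D.invB (s : A × B × B × A).2.2.1)
    obtain ⟨w, hw1, hw2, hw3⟩ := exists_ne_ne_ne hB4 (D.invB x.2.1)
      (D.invB (s : A × B × B × A).2.2.1) (D.invB f)
    obtain ⟨u, huR, hua, hub'⟩ := D.exists_ab' (D.invA x.2.2.2) f
    have hua' : u.2.2.2 = (s : A × B × B × A).1 := hcase f hf1 hf2 u huR hua hub'
    obtain ⟨z, hzR, hza', hzb'⟩ := D.exists_a'b' (D.invA x.2.2.2) w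
    have hzA : z.1 ≠ D.invA x.2.2.2 := by
      intro h
      obtain ⟨p, hpR, hpa, hpb⟩ := D.exists_ab' (D.invA x.2.2.2) w
      have he : z = p := D.inj_ab' hzR hpR (h.trans hpa.symm) (hzb'.trans hpb.symm)
      have h2 : z.2.2.2 = (s : A × B × B × A).1 := by
        rw [he]; exact hcase w hw1 hw2 p hpR hpa hpb
      apply hxa'
      rw [← D.invA_invA x.2.2.2, ← hza'.symm.trans h2]
    obtain ⟨y, hyR, hya', hyb'⟩ := D.exists_a'b' z.1 x.2.1
    have exy : D.M1 ⟨y, hyR⟩ ⟨x, hxR⟩ = 1 ∨ D.M2 ⟨y, hyR⟩ ⟨x, hxR⟩ = 1 := by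
      refine D.edgeH hyb' fun h => ?_
      have hξ := (D.cond_i x.1 x.2.1 x.2.2.1 x.2.2.2 hxR).1
      have he : y = (D.invA x.1, x.2.2.1, x.2.1, D.invA x.2.2.2) :=
        D.inj_ab' hyR hξ h hyb'
      exact hzA (by rw [← hya', he])
    have eyz : D.M1 ⟨z, hzR⟩ ⟨y, hyR⟩ = 1 ∨ D.M2 ⟨z, hzR⟩ ⟨y, hyR⟩ = 1 := by
      refine D.edgeV hya'.symm fun h => ?_
      have hη := (D.cond_i y.1 y.2.1 y.2.2.1 y.2.2.2 hyR).2.2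
      have he : z = (y.2.2.2, D.invB y.2.1, D.invB y.2.2.1, y.1) :=
        D.inj_ab hzR hη hya'.symm h
      apply hw1
      rw [← hzb', he]
      rw [hyb']
    have ezu : D.M1 ⟨u, huR⟩ ⟨z, hzR⟩ = 1 ∨ D.M2 ⟨u, huR⟩ ⟨z, hzR⟩ = 1 := by
      refine D.edgeV (hua.trans hza'.symm) fun h => ?_
      have hη := (D.cond_i z.1 z.2.1 z.2.2.1 z.2.2.2 hzR).2.2
      have he : u = (z.2.2.2, D.invB z.2.1, D.invB z.2.2.1, z.1) :=
        D.inj_ab huR hη (hua.trans hza'.symm) h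
      apply hw3
      have hb : f = D.invB w := by rw [← hub', he, hzb']
      rw [hb, D.invB_invB]
    have eus : D.M1 s ⟨u, huR⟩ = 1 ∨ D.M2 s ⟨u, huR⟩ = 1 := by
      refine D.edgeV hua'.symm fun h => ?_
      have hη := (D.cond_i u.1 u.2.1 u.2.2.1 u.2.2.2 huR).2.2
      have he : (s : A × B × B × A) = (u.2.2.2, D.invB u.2.1, D.invB u.2.2.1, u.1) :=
        D.inj_ab s.2 hη hua'.symm h
      have hb : (s : A × B × B × A).2.2.1 = D.invB f := by rw [he, hub']
      exact hf2 (by rw [hb, D.invB_invB])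
    exact Relation.TransGen.head exy (Relation.TransGen.head eyz
      (Relation.TransGen.head ezu (Relation.TransGen.single eus)))
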